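/- With T(Ψ) the Bernays–Schönfinkel CNF over constants 0, 1 and the single (2n+1)-ary predicate p built from the closed QBF Ψ = ∃x_1 ∀y_1 ... ∃x_n ∀y_n cnf via constraint families (1)–(4), T(Ψ) is unsatisfiable if and only if there exist Boolean values y_1,...,y_n and z_1,...,z_n and a finite sequence of ground atoms that starts at p(0,y_1,0,y_2,...,0,y_n,0), ends at p(1,z_1,1,z_2,...,1,z_n,1), and in which each consecutive pair of atoms is linked by a ground instance of one of the equivalences of families (1) or (2). -/

import Mathlib

/-- Terms over variables `V` and constant symbols `K`
(Bernays–Schönfinkel: the only function symbols are constants). -/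
inductive Trm (V K : Type) : Type where
  | var : V → Trm V K
  | const : K → Trm V K
deriving DecidableEq

/-- A first-order literal (no equality): a polarity, a predicate symbol
and a list of argument terms. -/
structure Lit (V K P : Type) : Type where
  pol : Bool
  pred : P
  args : List (Trm V K)
deriving DecidableEq

/-- A clause is a (finite) set of literals, read disjunctively. -/
abbrev Clause (V K P : Type) := Finset (Lit V K P)

/-- A CNF is a list of clauses, read conjunctively,
with all variables universally quantified. -/
abbrev CNF (V K P : Type) := List (Clause V K P)

variable {V K P : Type}

/-- The argument of a literal at the (1-based) position `i`. -/
def Lit.argAt (l : Lit V K P) : ℕ → Option (Trm V K)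
  | 0 => none
  | i + 1 => l.args[i]?

/-- Variable `u` occurs at argument position `i` of the literal `l`. -/
def Lit.varAt (l : Lit V K P) (u : V) (i : ℕ) : Prop := l.argAt i = some (Trm.var u)

/-- Variable `u` occurs in the literal `l`. -/
def Lit.hasVar (l : Lit V K P) (u : V) : Prop := ∃ i, l.varAt u i

/-- `i` is the least argument position at which `u` occurs in `l`. -/
def Lit.firstOccAt (l : Lit V K P) (u : V) (i : ℕ) : Prop :=
  l.varAt u i ∧ ∀ j, l.varAt u j → i ≤ j

/-- The QEALM clause condition: whenever a variable `u` occurs in several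
literals of the clause, the least position at which it occurs is the same in
all these literals, and these literals agree on all argument positions up to
(and including) that one (a shared initial segment). -/
def QEALMClause (C : Clause V K P) : Prop :=
  ∀ (u : V), ∀ l₁ ∈ C, ∀ l₂ ∈ C, l₁.hasVar u → l₂.hasVar u →
    ∃ i, l₁.firstOccAt u i ∧ l₂.firstOccAt u i ∧ ∀ j ≤ i, l₁.argAt j = l₂.argAt j

/-- A CNF is in the QEALM fragment iff every clause satisfies the QEALM clause condition. -/
def QEALM (φ : CNF V K P) : Prop := ∀ C ∈ φ, QEALMClause C

/-- A first-order structure for the signature `(K, P)` (no equality). -/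
structure Model (K P : Type) : Type 1 where
  Dom : Type
  dne : Nonempty Dom
  constVal : K → Dom
  predVal : P → List Dom → Prop

/-- Value of a term in a model under a variable assignment. -/
def Trm.val (M : Model K P) (ρ : V → M.Dom) : Trm V K → M.Dom
  | .var u => ρ u
  | .const c => M.constVal c

/-- Truth of a literal in a model under a variable assignment. -/
def Lit.holds (M : Model K P) (ρ : V → M.Dom) (l : Lit V K P) : Prop :=
  if l.pol then M.predVal l.pred (l.args.map (Trm.val M ρ))
  else ¬ M.predVal l.pred (l.args.map (Trm.val M ρ))

/-- Truth of a clause (a disjunction of literals). -/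
def Clause.holds (M : Model K P) (ρ : V → M.Dom) (C : Clause V K P) : Prop :=
  ∃ l ∈ C, l.holds M ρ

/-- First-order satisfiability (without equality) of a universally quantified CNF. -/
def CNF.Satisfiable (φ : CNF V K P) : Prop :=
  ∃ M : Model K P, ∀ ρ : V → M.Dom, ∀ C ∈ φ, C.holds M ρ

/-- Applying a substitution to a term. -/
def Trm.subst (σ : V → Trm V K) : Trm V K → Trm V K
  | .var u => σ u
  | .const c => .const c

/-- Applying a substitution to a literal. -/
def Lit.subst (σ : V → Trm V K) (l : Lit V K P) : Lit V K P :=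
  ⟨l.pol, l.pred, l.args.map (Trm.subst σ)⟩

/-- Applying a substitution to a clause. -/
def Clause.subst [DecidableEq V] [DecidableEq K] [DecidableEq P]
    (σ : V → Trm V K) (C : Clause V K P) : Clause V K P :=
  C.image (Lit.subst σ)

/-- Applying a substitution to a CNF. -/
def CNF.subst [DecidableEq V] [DecidableEq K] [DecidableEq P]
    (σ : V → Trm V K) (φ : CNF V K P) : CNF V K P :=
  φ.map (Clause.subst σ)

/-- An outer variable of a clause: a variable appearing in every literal of the clause. -/
def OuterVar (C : Clause V K P) (u : V) : Prop := ∀ l ∈ C, l.hasVar u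

/-- `i` is the least position of an occurrence of `u` in any literal of `C`. -/
def LeastOccIn (C : Clause V K P) (u : V) (i : ℕ) : Prop :=
  (∃ l ∈ C, l.varAt u i) ∧ ∀ j, (∃ l ∈ C, l.varAt u j) → i ≤ j

/-- `i` is an outer position of the clause `C`. -/
def OuterPosClause (C : Clause V K P) (i : ℕ) : Prop :=
  ∃ u : V, OuterVar C u ∧ LeastOccIn C u i

/-- `i` is a neutral position of the clause `C`: some term `t`, a constant or an
outer variable of `C`, occupies the `i`-th argument of every literal of `C`. -/
def NeutralPos (C : Clause V K P) (i : ℕ) : Prop :=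
  ∃ t : Trm V K,
    ((∃ c, t = Trm.const c) ∨ (∃ u, t = Trm.var u ∧ OuterVar C u)) ∧
    ∀ l ∈ C, l.argAt i = some t

/-- `i` is an outer position of the CNF `φ`: an outer position of some clause and a
neutral position of every clause. -/
def OuterPosCNF (φ : CNF V K P) (i : ℕ) : Prop :=
  (∃ C ∈ φ, OuterPosClause C i) ∧ ∀ D ∈ φ, NeutralPos D i

/-- Variable `u` occurs at argument position `i` in some literal of `φ`. -/
def VarOccursAt (φ : CNF V K P) (u : V) (i : ℕ) : Prop :=
  ∃ C ∈ φ, ∃ l ∈ C, l.varAt u i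

/-- `σ` is the substitution that replaces every variable occurring at an argument
position `i` that is an outer position of `φ` by the constant `c i`, and leaves
all other variables unchanged. -/
def IsOuterSubst (φ : CNF V K P) (c : ℕ → K) (σ : V → Trm V K) : Prop :=
  (∀ u i, OuterPosCNF φ i → VarOccursAt φ u i → σ u = Trm.const (c i)) ∧
  (∀ u, (¬ ∃ i, OuterPosCNF φ i ∧ VarOccursAt φ u i) → σ u = Trm.var u)

/-- A clause is inseparable if it is a single literal or some variable occurs in
every literal of the clause. -/
def InsepClause (C : Clause V K P) : Prop :=
  (∃ l, C = {l}) ∨ ∃ u : V, ∀ l ∈ C, l.hasVar u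

/-- `Kc` is a component of a clause `C`: a non-empty inseparable subclause of `C`
closed under sharing variables with literals of `C`. -/
def IsComponent (Kc C : Clause V K P) : Prop :=
  Kc.Nonempty ∧ Kc ⊆ C ∧ InsepClause Kc ∧
    ∀ a ∈ Kc, ∀ b ∈ C, (∃ u : V, a.hasVar u ∧ b.hasVar u) → b ∈ Kc

/-- All variables shared between `l₁` and `l₂` occur as arguments in positions `≤ m`. -/
def SharesUpTo (l₁ l₂ : Lit V K P) (m : ℕ) : Prop :=
  ∀ u : V, l₁.hasVar u → l₂.hasVar u →
    (∃ j ≤ m, l₁.varAt u j) ∧ (∃ j ≤ m, l₂.varAt u j)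

/-- `i` is a fork index of `φ`: for some clause `C` of `φ` and literals `l₁, l₂` of
`C` (not necessarily distinct), `i` is the minimal value such that every variable
shared between `l₁` and `l₂` occurs at some argument position `≤ i`.  In particular,
`0` is a fork index if some such pair shares no variables. -/
def ForkIndex (φ : CNF V K P) (i : ℕ) : Prop :=
  ∃ C ∈ φ, ∃ l₁ ∈ C, ∃ l₂ ∈ C, IsLeast {m | SharesUpTo l₁ l₂ m} i

/-! ### The QBF `Ψ = ∃x₁∀y₁ … ∃xₙ∀yₙ cnf(x₁,y₁,…,xₙ,yₙ)` -/

/-- The propositional atoms of `Ψ`: `(i, false)` is `xᵢ` and `(i, true)` is `yᵢ`. -/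
abbrev QAtom (n : ℕ) := Fin n × Bool

/-- The CNF matrix of `Ψ`: a list of clauses of propositional literals. -/
abbrev QMat (n : ℕ) := List (List (Bool × QAtom n))

/-- Truth of the matrix under an assignment. -/
def QMat.eval {n : ℕ} (α : QAtom n → Bool) (m : QMat n) : Prop :=
  ∀ Cl ∈ m, ∃ l ∈ Cl, α l.2 = l.1

/-- `QTruth n m k α` is the truth value `qbf(x₁,…,y_k)` of
`∃x_{k+1} ∀y_{k+1} … ∃xₙ ∀yₙ cnf` with the first `2k` variables fixed by `α`
(`∀x φ := φ[⊥/x] ∧ φ[⊤/x]`, `∃x φ := φ[⊥/x] ∨ φ[⊤/x]`). -/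
def QTruth (n : ℕ) (m : QMat n) (k : ℕ) (α : QAtom n → Bool) : Prop :=
  if h : k < n then
    ∃ b : Bool, ∀ c : Bool,
      QTruth n m (k + 1)
        (Function.update (Function.update α (⟨k, h⟩, false) b) (⟨k, h⟩, true) c)
  else QMat.eval α m
termination_by n - k

/-! ### The translation `T(Ψ)` over the constants `0 = false`, `1 = true` and a
single `(2n+1)`-ary predicate `p`.

First-order variables are pairs `(i, j) : Fin n × Fin 3`, where `(i,0)` is `xᵢ`,
`(i,1)` is `yᵢ` and `(i,2)` is `zᵢ`. -/

/-- The first-order variables of `T(Ψ)`. -/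
abbrev QVar (n : ℕ) := Fin n × Fin 3

/-- First-order literals of `T(Ψ)` (a single predicate symbol `p`, so `P := Unit`). -/
abbrev QFLit (n : ℕ) := Lit (QVar n) Bool Unit

/-- First-order clauses of `T(Ψ)`. -/
abbrev QFClause (n : ℕ) := Clause (QVar n) Bool Unit

/-- The interleaved argument list `(f 0, g 0, f 1, g 1, …, f (n-1), g (n-1), last)`
of length `2n+1`. -/
def interleave {n : ℕ} (f g : Fin n → Trm (QVar n) Bool) (last : Trm (QVar n) Bool) :
    List (Trm (QVar n) Bool) :=
  ((List.finRange n).map (fun i => [f i, g i])).flatten ++ [last]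

/-- `t^C_v`: the constant `0` if the positive literal `v` is in `C`, the constant
`1` if `¬v` is in `C`, and the first-order variable `v` otherwise. -/
def tOf {n : ℕ} (Cl : List (Bool × QAtom n)) (v : QAtom n) : Trm (QVar n) Bool :=
  if (true, v) ∈ Cl then Trm.const false
  else if (false, v) ∈ Cl then Trm.const true
  else Trm.var (v.1, if v.2 then 1 else 0)

/-- Family (1), left-hand side: `p(t^C_{x₁},t^C_{y₁},…,t^C_{xₙ},t^C_{yₙ},0)`. -/
def args1L {n : ℕ} (Cl : List (Bool × QAtom n)) : List (Trm (QVar n) Bool) :=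
  interleave (fun i => tOf Cl (i, false)) (fun i => tOf Cl (i, true)) (Trm.const false)

/-- Family (1), right-hand side: `p(t^C_{x₁},t^C_{y₁},…,t^C_{xₙ},t^C_{yₙ},1)`. -/
def args1R {n : ℕ} (Cl : List (Bool × QAtom n)) : List (Trm (QVar n) Bool) :=
  interleave (fun i => tOf Cl (i, false)) (fun i => tOf Cl (i, true)) (Trm.const true)

/-- Family (2), left-hand side:
`p(x₁,y₁,…,x_{k-1},y_{k-1},1,y_k,0,y_{k+1},…,0,y_n,0)`. -/
def args2L {n : ℕ} (k : Fin n) : List (Trm (QVar n) Bool) :=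
  interleave
    (fun i => if i < k then Trm.var (i, 0)
              else if i = k then Trm.const true else Trm.const false)
    (fun i => Trm.var (i, 1)) (Trm.const false)

/-- Family (2), right-hand side:
`p(x₁,y₁,…,x_{k-1},y_{k-1},0,z_k,1,z_{k+1},…,1,z_n,1)`. -/
def args2R {n : ℕ} (k : Fin n) : List (Trm (QVar n) Bool) :=
  interleave
    (fun i => if i < k then Trm.var (i, 0)
              else if i = k then Trm.const false else Trm.const true)
    (fun i => if i < k then Trm.var (i, 1) else Trm.var (i, 2)) (Trm.const true)

/-- Family (3): the argument list `(0,y₁,0,y₂,…,0,yₙ,0)` of the positive unit clause. -/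
def args3 {n : ℕ} : List (Trm (QVar n) Bool) :=
  interleave (fun _ => Trm.const false) (fun i => Trm.var (i, 1)) (Trm.const false)

/-- Family (4): the argument list `(1,y₁,1,y₂,…,1,yₙ,1)` of the negative unit clause. -/
def args4 {n : ℕ} : List (Trm (QVar n) Bool) :=
  interleave (fun _ => Trm.const true) (fun i => Trm.var (i, 1)) (Trm.const true)

/-- The clause `¬p(A) ∨ p(B)`. -/
def implClause {n : ℕ} (A B : List (Trm (QVar n) Bool)) : QFClause n :=
  {⟨false, (), A⟩, ⟨true, (), B⟩}

/-- The two clauses encoding the equivalence `p(A) ↔ p(B)`. -/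
def eqvClauses {n : ℕ} (A B : List (Trm (QVar n) Bool)) : List (QFClause n) :=
  [implClause A B, implClause B A]

/-- The Bernays–Schönfinkel CNF `T(Ψ)`: families (1), (2) of equivalences and the
unit clauses (3) and (4). -/
def T {n : ℕ} (m : QMat n) : CNF (QVar n) Bool Unit :=
  (m.map (fun Cl => eqvClauses (args1L Cl) (args1R Cl))).flatten ++
  ((List.finRange n).map (fun k => eqvClauses (args2L k) (args2R k))).flatten ++
  [({⟨true, (), args3⟩} : QFClause n), ({⟨false, (), args4⟩} : QFClause n)]

/-! ### Ground atoms of the predicate `p` and the reachability steps -/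

/-- Evaluation of an argument list under a ground (Boolean-valued) assignment of
the first-order variables, yielding a ground atom of `p`, i.e. a `(2n+1)`-tuple
over `{0,1}` represented as a list of Booleans. -/
def evalArgs {n : ℕ} (ρ : QVar n → Bool) (A : List (Trm (QVar n) Bool)) : List Bool :=
  A.map (fun t => match t with | Trm.var v => ρ v | Trm.const b => b)

/-- The equivalences of families (1) and (2), as pairs of argument lists. -/
def EqvPairs {n : ℕ} (m : QMat n) :
    List (List (Trm (QVar n) Bool) × List (Trm (QVar n) Bool)) :=
  m.map (fun Cl => (args1L Cl, args1R Cl)) ++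
    (List.finRange n).map (fun k => (args2L k, args2R k))

/-- Two ground atoms are linked by a step iff they are the two sides of a ground
instance of one of the equivalences of families (1) or (2). -/
def Step {n : ℕ} (m : QMat n) (a b : List Bool) : Prop :=
  ∃ pr ∈ EqvPairs m, ∃ ρ : QVar n → Bool,
    (a = evalArgs ρ pr.1 ∧ b = evalArgs ρ pr.2) ∨
    (a = evalArgs ρ pr.2 ∧ b = evalArgs ρ pr.1)

/-- The ground atom `p(0,y₁,0,y₂,…,0,yₙ,0)`. -/
def startAtom {n : ℕ} (y : Fin n → Bool) : List Bool :=
  evalArgs (fun v => y v.1) (args3 (n := n))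

/-- The ground atom `p(1,z₁,1,z₂,…,1,zₙ,1)`. -/
def endAtom {n : ℕ} (z : Fin n → Bool) : List Bool :=
  evalArgs (fun v => z v.1) (args4 (n := n))

/-! Every step is a ground instance of an equivalence of `T(Ψ)`, so in any model the truth
of ground atoms is constant along a path of steps; clause (3) makes the start atom true and
clause (4) makes the end atom false, so a path rules out every model. Conversely, interpret
`p` over `{0, 1}` as "reachable by steps from some `p(0,y₁,…,0,yₙ,0)`". Since `Step` is
symmetric, this is invariant under every ground instance of (1) and (2), clause (3) holds
trivially, and clause (4) holds exactly when no path exists. -/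

section

variable {n : ℕ} {m : QMat n}

lemma map_val_constVal_comp (M : Model Bool Unit) (ρ : QVar n → Bool)
    (A : List (Trm (QVar n) Bool)) :
    A.map (Trm.val M (M.constVal ∘ ρ)) = (evalArgs ρ A).map M.constVal := by
  simp only [evalArgs, List.map_map]
  congr 1
  funext t
  cases t <;> rfl

lemma implClause_holds_iff (M : Model Bool Unit) (ρ : QVar n → M.Dom)
    (A B : List (Trm (QVar n) Bool)) :
    (implClause A B).holds M ρ ↔
      (M.predVal () (A.map (Trm.val M ρ)) → M.predVal () (B.map (Trm.val M ρ))) := by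
  simp [implClause, Clause.holds, Lit.holds, imp_iff_not_or]

lemma mem_T_iff {C : QFClause n} :
    C ∈ T m ↔
      (∃ pr ∈ EqvPairs m, C = implClause pr.1 pr.2 ∨ C = implClause pr.2 pr.1) ∨
        C = {⟨true, (), args3⟩} ∨ C = {⟨false, (), args4⟩} := by
  have hT : T m = (EqvPairs m).flatMap (fun pr => eqvClauses pr.1 pr.2) ++
      [{⟨true, (), args3⟩}, {⟨false, (), args4⟩}] := by
    simp [T, EqvPairs, List.flatMap, Function.comp_def]
  rw [hT]
  simp [List.mem_flatMap, eqvClauses]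

lemma evalArgs_args3 (ρ : QVar n → Bool) :
    evalArgs ρ (args3 (n := n)) = startAtom (fun i => ρ (i, 1)) := by
  simp only [startAtom, args3, evalArgs, interleave, List.map_append, List.map_flatten,
    List.map_map]
  rfl

lemma evalArgs_args4 (ρ : QVar n → Bool) :
    evalArgs ρ (args4 (n := n)) = endAtom (fun i => ρ (i, 1)) := by
  simp only [endAtom, args4, evalArgs, interleave, List.map_append, List.map_flatten,
    List.map_map]
  rfl

def Model.GroundHolds (M : Model Bool Unit) (a : List Bool) : Prop :=
  M.predVal () (a.map M.constVal)

lemma Model.groundHolds_iff_of_step {M : Model Bool Unit}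
    (hM : ∀ ρ : QVar n → M.Dom, ∀ C ∈ T m, C.holds M ρ) {a b : List Bool}
    (h : Step m a b) : M.GroundHolds a ↔ M.GroundHolds b := by
  obtain ⟨pr, hpr, ρ, hab⟩ := h
  have hfwd := hM (M.constVal ∘ ρ) _ (mem_T_iff.2 (Or.inl ⟨pr, hpr, Or.inl rfl⟩))
  have hbwd := hM (M.constVal ∘ ρ) _ (mem_T_iff.2 (Or.inl ⟨pr, hpr, Or.inr rfl⟩))
  simp only [implClause_holds_iff, map_val_constVal_comp] at hfwd hbwd
  rcases hab with ⟨rfl, rfl⟩ | ⟨rfl, rfl⟩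
  exacts [⟨hfwd, hbwd⟩, ⟨hbwd, hfwd⟩]

lemma Model.GroundHolds.of_reflTransGen {M : Model Bool Unit}
    (hM : ∀ ρ : QVar n → M.Dom, ∀ C ∈ T m, C.holds M ρ) {a b : List Bool}
    (ha : M.GroundHolds a) (hab : Relation.ReflTransGen (Step m) a b) : M.GroundHolds b := by
  induction hab with
  | refl => exact ha
  | tail _ hstep ih => exact (groundHolds_iff_of_step hM hstep).1 ih

lemma not_satisfiable_T_of_reflTransGen {y z : Fin n → Bool}
    (hpath : Relation.ReflTransGen (Step m) (startAtom y) (endAtom z)) :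
    ¬ CNF.Satisfiable (T m) := by
  rintro ⟨M, hM⟩
  have hstart := hM (M.constVal ∘ fun v => y v.1) _ (mem_T_iff.2 (Or.inr (Or.inl rfl)))
  have hend := hM (M.constVal ∘ fun v => z v.1) _ (mem_T_iff.2 (Or.inr (Or.inr rfl)))
  simp only [Clause.holds, Finset.mem_singleton, exists_eq_left, Lit.holds, if_true,
    Bool.false_eq_true, if_false, map_val_constVal_comp] at hstart hend
  exact hend (Model.GroundHolds.of_reflTransGen hM hstart hpath)

def reachModel (m : QMat n) : Model Bool Unit where
  Dom := Bool
  dne := ⟨false⟩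
  constVal := id
  predVal _ a := ∃ y : Fin n → Bool, Relation.ReflTransGen (Step m) (startAtom y) a

lemma satisfiable_T_of_forall_not_reflTransGen
    (h : ∀ y z : Fin n → Bool, ¬ Relation.ReflTransGen (Step m) (startAtom y) (endAtom z)) :
    CNF.Satisfiable (T m) := by
  refine ⟨reachModel m, fun (ρ : QVar n → Bool) C hC => ?_⟩
  have hval (A : List (Trm (QVar n) Bool)) :
      A.map (Trm.val (reachModel m) ρ) = evalArgs ρ A :=
    (map_val_constVal_comp (reachModel m) ρ A).trans (List.map_id _)
  rcases mem_T_iff.1 hC with ⟨pr, hpr, rfl | rfl⟩ | rfl | rfl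
  · refine (implClause_holds_iff (reachModel m) ρ _ _).2 ?_
    rw [hval, hval]
    exact fun ⟨y, hy⟩ => ⟨y, hy.tail ⟨pr, hpr, ρ, Or.inl ⟨rfl, rfl⟩⟩⟩
  · refine (implClause_holds_iff (reachModel m) ρ _ _).2 ?_
    rw [hval, hval]
    exact fun ⟨y, hy⟩ => ⟨y, hy.tail ⟨pr, hpr, ρ, Or.inr ⟨rfl, rfl⟩⟩⟩
  · refine ⟨_, Finset.mem_singleton_self _, ?_⟩
    show (reachModel m).predVal () (args3.map (Trm.val (reachModel m) ρ))
    rw [hval, evalArgs_args3]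
    exact ⟨_, .refl⟩
  · refine ⟨_, Finset.mem_singleton_self _, ?_⟩
    show ¬ (reachModel m).predVal () (args4.map (Trm.val (reachModel m) ρ))
    rw [hval, evalArgs_args4]
    exact fun ⟨y, hy⟩ => h y _ hy

end

/-- `T(Ψ)` is unsatisfiable iff there are Boolean values
`y₁,…,yₙ` and `z₁,…,zₙ` and a finite sequence of ground atoms starting at
`p(0,y₁,0,y₂,…,0,yₙ,0)`, ending at `p(1,z₁,1,z₂,…,1,zₙ,1)`, in which each
consecutive pair of atoms is linked by a ground instance of one of the
equivalences of families (1) or (2). -/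
theorem statement_11 {n : ℕ} (m : QMat n) :
    ¬ CNF.Satisfiable (T m) ↔
      ∃ y z : Fin n → Bool,
        Relation.ReflTransGen (Step m) (startAtom y) (endAtom z) := by
  constructor
  · intro hunsat
    by_contra! hno
    exact hunsat (satisfiable_T_of_forall_not_reflTransGen hno)
  · rintro ⟨y, z, hpath⟩
    exact not_satisfiable_T_of_reflTransGen hpath
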